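/- arXiv:1812.03458 — 3 statements merged into one kernel-verified Lean document; each statement's English description precedes it below -/
import Mathlib

section
/- Let F = (F_p)_{p∈ω^ω} be a family of free filters on ω and τ_F the topology on ω^ω generated by the subbase {Ŝ_p(M,g) : p ∈ ω^ω, M ∈ F_p, g : M → ω}. Then the standard Lusin scheme S (S_a = {p : a ⊑ p}) is a Lusin π-base for the space (ω^ω, τ_F). -/
open Set Topology

/-- The restriction `p↾n` of `p : ω^ω` as a list of length `n`. -/
def restrict (p : ℕ → ℕ) (n : ℕ) : List ℕ := List.ofFn (fun i : Fin n => p i)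

/-- `a ⊑ p` : the finite sequence `a` is an initial segment of `p : ω^ω`. -/
def ExtendsL (a : List ℕ) (p : ℕ → ℕ) : Prop := restrict p a.length = a

/-- `a ⊏ b` : proper initial segment for finite sequences. -/
def SPrefix (a b : List ℕ) : Prop := a <+: b ∧ a ≠ b

/-- The standard Lusin scheme: `S_a = {p ∈ ω^ω : a ⊑ p}`. -/
def Sset (a : List ℕ) : Set (ℕ → ℕ) := {p | ExtendsL a p}

/-- The `k`-tail of `L_a` : `⋃_{j ≥ k} L_{a⌢j}`. -/
def tailL {X : Type*} (L : List ℕ → Set X) (a : List ℕ) (k : ℕ) : Set X :=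
  ⋃ j, ⋃ (_ : k ≤ j), L (a ++ [j])

/-- `shoot_L(a) ⋐ U` : some tail of `L_a` is contained in `U`. -/
def Inn {X : Type*} (L : List ℕ → Set X) (a : List ℕ) (U : Set X) : Prop :=
  ∃ k, tailL L a k ⊆ U

/-- A strict Lusin scheme on a set `X` : conditions (L0)–(L4). -/
def StrictLusin {X : Type*} (L : List ℕ → Set X) : Prop :=
  (∀ a n, L (a ++ [n]) ⊆ L a) ∧
  (∀ a n m, n ≠ m → L (a ++ [n]) ∩ L (a ++ [m]) = ∅) ∧
  (L [] = Set.univ) ∧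
  (∀ a, L a = ⋃ n, L (a ++ [n])) ∧
  (∀ p : ℕ → ℕ, ∃ x, (⋂ n, L (restrict p n)) = {x})

/-- A Lusin π-base for the space `(X, t)` : an open strict Lusin scheme with (L6). -/
def IsLusinPiBase {X : Type*} (t : TopologicalSpace X) (L : List ℕ → Set X) : Prop :=
  StrictLusin L ∧ (∀ a, IsOpen[t] (L a)) ∧
  ∀ p : X, ∀ U ∈ @nhds X t p, ∃ a k, p ∈ L a ∧ tailL L a k ⊆ U

/-- A π-net for `(X, t)` : nonempty sets, one inside every nonempty open set. -/
def IsPiNet {X : Type*} (t : TopologicalSpace X) (γ : Set (Set X)) : Prop :=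
  (∀ G ∈ γ, G.Nonempty) ∧ ∀ U, IsOpen[t] U → U.Nonempty → ∃ G ∈ γ, G ⊆ U

/-- Strict lexicographic order `◁` on `ω^ω`. -/
def lexLt (p q : ℕ → ℕ) : Prop := ∃ n, restrict p n = restrict q n ∧ p n < q n

/-- `p⇣ = {p} ∪ {q : p ◁ q}`. -/
def down (p : ℕ → ℕ) : Set (ℕ → ℕ) := insert p {q | lexLt p q}

/-- `A↑ = ⋃_{p ∈ A} p⇣`. -/
def upSet (A : Set (ℕ → ℕ)) : Set (ℕ → ℕ) := ⋃ p ∈ A, down p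

/-- `Ŝ_p(M, g) = {p} ∪ ⋃_{m ∈ M} ⋃_{j ≥ g(m)} S_{(p↾m)⌢j}`. -/
def Shat (p : ℕ → ℕ) (M : Set ℕ) (g : ℕ → ℕ) : Set (ℕ → ℕ) :=
  insert p (⋃ m ∈ M, tailL Sset (restrict p m) (g m))

/-- A free filter on `ω` : a proper filter (all members nonempty) whose members
have empty intersection. -/
def FreeFilter (F : Filter ℕ) : Prop := F.NeBot ∧ ⋂₀ F.sets = ∅

/-- The topology `τ_F` generated by the subbase of all sets `Ŝ_p(M, g)`, `M ∈ F_p`. -/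
def tauF (F : (ℕ → ℕ) → Filter ℕ) : TopologicalSpace (ℕ → ℕ) :=
  TopologicalSpace.generateFrom
    {U | ∃ p M g, M ∈ F p ∧ U = Shat p M g}

/-- A game: two interleaved strictly increasing sequences of pairs of finite sequences. -/
structure Game where
  c : ℕ → List ℕ × List ℕ
  d : ℕ → List ℕ × List ℕ
  hcd0 : ∀ n, SPrefix (c n).1 (d n).1
  hdc0 : ∀ n, SPrefix (d n).1 (c (n + 1)).1
  hcd1 : ∀ n, SPrefix (c n).2 (d n).2
  hdc1 : ∀ n, SPrefix (d n).2 (c (n + 1)).2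

/-- `(r0, r1)` is the result of the game `Γ`. -/
def Game.IsResult (Γ : Game) (r0 r1 : ℕ → ℕ) : Prop :=
  ∀ n, ExtendsL (Γ.c n).1 r0 ∧ ExtendsL (Γ.c n).2 r1

/-- A strategy: a pair of maps producing proper extensions. -/
structure Strategy where
  s0 : List ℕ × List ℕ → List ℕ
  s1 : List ℕ × List ℕ → List ℕ
  h0 : ∀ c, SPrefix c.1 (s0 c)
  h1 : ∀ c, SPrefix c.2 (s1 c)

/-- The game `Γ` follows the strategy `σ`. -/
def Game.Follows (Γ : Game) (σ : Strategy) : Prop :=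
  ∀ n, (Γ.d n).1 = σ.s0 (Γ.c n) ∧ (Γ.d n).2 = σ.s1 (Γ.c n)

/-- A candidate: a strict Lusin scheme on `ω^ω × ω^ω` whose members form a π-net
for the Baire product and have nonempty interior there. -/
def IsCandidate (L : List ℕ → Set ((ℕ → ℕ) × (ℕ → ℕ))) : Prop :=
  StrictLusin L ∧
  IsPiNet (inferInstance : TopologicalSpace ((ℕ → ℕ) × (ℕ → ℕ))) {S | ∃ b, S = L b} ∧
  ∀ b, (interior (L b)).Nonempty
section Aux

lemma restrict_length (p : ℕ → ℕ) (n : ℕ) : (restrict p n).length = n := by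
  simp [_root_.restrict]

lemma restrict_getElem (p : ℕ → ℕ) (n i : ℕ) (h : i < (restrict p n).length) :
    (restrict p n)[i] = p i := by
  simp [_root_.restrict]

lemma extendsL_iff {a : List ℕ} {p : ℕ → ℕ} :
    ExtendsL a p ↔ ∀ i, (h : i < a.length) → p i = a[i] := by
  unfold ExtendsL
  constructor
  · intro h i hi
    exact ((List.getElem_of_eq h.symm hi).trans (restrict_getElem p a.length i
      (by rw [restrict_length]; exact hi))).symm
  · intro h
    apply List.ext_getElem (restrict_length p a.length)
    intro i h1 h2
    rw [restrict_getElem]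
    have := h i h2
    omega

lemma extends_append {a : List ℕ} {n : ℕ} {p : ℕ → ℕ} :
    ExtendsL (a ++ [n]) p ↔ ExtendsL a p ∧ p a.length = n := by
  simp only [extendsL_iff, List.length_append, List.length_cons, List.length_nil]
  constructor
  · intro h
    refine ⟨fun i hi => ?_, ?_⟩
    · rw [h i (by omega)]
      exact List.getElem_append_left hi
    · rw [h a.length (by omega)]
      simp
  · rintro ⟨h1, h2⟩ i hi
    rcases Nat.lt_or_ge i a.length with hlt | hge
    · rw [h1 i hlt]
      exact (List.getElem_append_left hlt).symm
    · have : i = a.length := by omega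
      subst this
      simpa using h2

lemma extends_restrict {p q : ℕ → ℕ} {n : ℕ} :
    ExtendsL (restrict q n) p ↔ ∀ i < n, p i = q i := by
  rw [extendsL_iff]
  constructor
  · intro h i hi
    rw [h i (by rw [restrict_length]; exact hi), restrict_getElem]
  · intro h i hi
    rw [restrict_getElem]
    exact h i (by rw [restrict_length] at hi; exact hi)

lemma extends_restrict_self (p : ℕ → ℕ) (n : ℕ) : ExtendsL (restrict p n) p :=
  extends_restrict.2 fun _ _ => rfl

lemma mem_tailS {b : List ℕ} {k : ℕ} {r : ℕ → ℕ} :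
    r ∈ tailL Sset b k ↔ ExtendsL b r ∧ k ≤ r b.length := by
  simp only [tailL, Set.mem_iUnion, Sset, Set.mem_setOf_eq, extends_append]
  constructor
  · rintro ⟨j, hk, hb, hj⟩
    exact ⟨hb, hj ▸ hk⟩
  · rintro ⟨h1, h2⟩
    exact ⟨r b.length, h2, h1, rfl⟩

lemma tail_anti {b : List ℕ} {k k' : ℕ} (h : k ≤ k') :
    tailL Sset b k' ⊆ tailL Sset b k := by
  intro r hr
  rw [mem_tailS] at hr ⊢
  exact ⟨hr.1, h.trans hr.2⟩

lemma tail_subset_Shat {p : ℕ → ℕ} {M : Set ℕ} {g : ℕ → ℕ} {m : ℕ} (hm : m ∈ M) :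
    tailL Sset (restrict p m) (g m) ⊆ Shat p M g := by
  intro r hr
  exact Set.mem_insert_of_mem _ (Set.mem_biUnion hm hr)

lemma freeFilter_cofinite {F : Filter ℕ} (h : FreeFilter F) (n : ℕ) : {m | n ≤ m} ∈ F := by
  induction n with
  | zero => simp only [Nat.zero_le, Set.setOf_true]; exact Filter.univ_mem
  | succ n ih =>
    have hn : n ∉ ⋂₀ F.sets := by rw [h.2]; exact Set.notMem_empty n
    obtain ⟨A, hA, hnA⟩ : ∃ A ∈ F.sets, n ∉ A := by
      by_contra hc
      push_neg at hc
      exact hn fun A hA => hc A hA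
    have : {m | n ≤ m} ∩ A ⊆ {m | n + 1 ≤ m} := by
      rintro m ⟨h1, h2⟩
      have : m ≠ n := fun e => hnA (e ▸ h2)
      simp only [Set.mem_setOf_eq] at h1 ⊢
      omega
    exact Filter.mem_of_superset (Filter.inter_mem ih hA) this

lemma subbasic_good (F : (ℕ → ℕ) → Filter ℕ) (hF : ∀ p, FreeFilter (F p)) (p : ℕ → ℕ)
    {s : Set (ℕ → ℕ)} (hs : ∃ q M g, M ∈ F q ∧ s = Shat q M g) (hp : p ∈ s) :
    ∃ A ∈ F p, ∃ h : ℕ → ℕ, ∀ N ∈ A, ∀ k, h N ≤ k → tailL Sset (restrict p N) k ⊆ s := by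
  obtain ⟨q, M, g, hM, rfl⟩ := hs
  rcases eq_or_ne p q with rfl | hpq
  · exact ⟨M, hM, g, fun N hN k hk => (tail_anti hk).trans (tail_subset_Shat hN)⟩
  · have hp' : p ∈ ⋃ m ∈ M, tailL Sset (restrict q m) (g m) := by
      rcases hp with h | h
      · exact absurd h hpq
      · exact h
    obtain ⟨m, hm, hpm⟩ := Set.mem_iUnion₂.1 hp'
    rw [mem_tailS] at hpm
    rw [restrict_length] at hpm
    refine ⟨{N | m + 1 ≤ N}, freeFilter_cofinite (hF p) (m + 1), fun _ => 0, ?_⟩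
    intro N hN k _ r hr
    rw [mem_tailS, restrict_length] at hr
    have hagree : ∀ i < N, r i = p i := extends_restrict.1 hr.1
    have hNm : m + 1 ≤ N := hN
    refine tail_subset_Shat hm ?_
    rw [mem_tailS, restrict_length]
    constructor
    · rw [extends_restrict]
      intro i hi
      rw [hagree i (by omega)]
      exact extends_restrict.1 hpm.1 i hi
    · rw [hagree m (by omega)]
      exact hpm.2

lemma finite_good (F : (ℕ → ℕ) → Filter ℕ) (hF : ∀ p, FreeFilter (F p)) (p : ℕ → ℕ)
    {σ : Set (Set (ℕ → ℕ))} (hfin : σ.Finite)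
    (hsub : σ ⊆ {U | ∃ q M g, M ∈ F q ∧ U = Shat q M g}) (hp : ∀ s ∈ σ, p ∈ s) :
    ∃ A ∈ F p, ∃ h : ℕ → ℕ, ∀ N ∈ A, ∀ k, h N ≤ k → tailL Sset (restrict p N) k ⊆ ⋂₀ σ := by
  revert hsub hp
  refine Set.Finite.induction_on σ hfin ?_ ?_
  · intro _ _
    exact ⟨Set.univ, Filter.univ_mem, fun _ => 0, by simp⟩
  · intro a s hna hfins ih hsub hp
    obtain ⟨A1, hA1, h1, H1⟩ := subbasic_good F hF p (hsub (Set.mem_insert _ _))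
      (hp a (Set.mem_insert _ _))
    obtain ⟨A2, hA2, h2, H2⟩ := ih ((Set.subset_insert _ _).trans hsub)
      (fun t ht => hp t (Set.mem_insert_of_mem _ ht))
    refine ⟨A1 ∩ A2, Filter.inter_mem hA1 hA2, fun N => max (h1 N) (h2 N), ?_⟩
    rintro N ⟨hN1, hN2⟩ k hk
    rw [Set.sInter_insert]
    exact Set.subset_inter (H1 N hN1 k (le_trans (le_max_left _ _) hk))
      (H2 N hN2 k (le_trans (le_max_right _ _) hk))

end Aux

/-- The standard Lusin scheme is a Lusin π-base for `(ω^ω, τ_F)`. -/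
theorem stmt10 (F : (ℕ → ℕ) → Filter ℕ) (hF : ∀ p, FreeFilter (F p)) :
    IsLusinPiBase (tauF F) Sset := by
  have hsl : StrictLusin Sset := by
    refine ⟨?_, ?_, ?_, ?_, ?_⟩
    · intro a n p hp
      exact (extends_append.1 hp).1
    · intro a n m hnm
      ext p
      simp only [Set.mem_inter_iff, Set.mem_empty_iff_false, iff_false, not_and]
      intro h1 h2
      rw [Sset, Set.mem_setOf_eq, extends_append] at h1 h2
      exact hnm (h1.2.symm.trans h2.2)
    · ext p
      simp only [Set.mem_univ, iff_true]
      show ExtendsL [] p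
      rw [extendsL_iff]
      intro i hi
      simp at hi
    · intro a
      ext p
      simp only [Set.mem_iUnion]
      constructor
      · intro hp
        exact ⟨p a.length, extends_append.2 ⟨hp, rfl⟩⟩
      · rintro ⟨n, hn⟩
        exact (extends_append.1 hn).1
    · intro p
      refine ⟨p, ?_⟩
      ext q
      simp only [Set.mem_iInter, Set.mem_singleton_iff]
      constructor
      · intro h
        funext i
        exact extends_restrict.1 (h (i + 1)) i (by omega)
      · rintro rfl n
        exact extends_restrict_self q n
  have hopen : ∀ a, IsOpen[tauF F] (Sset a) := by
    intro a
    letI := tauF F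
    have heq : Sset a = ⋃ q ∈ Sset a, Shat q {m | a.length ≤ m} (fun _ => 0) := by
      ext r
      simp only [Set.mem_iUnion]
      constructor
      · intro hr
        exact ⟨r, hr, Set.mem_insert _ _⟩
      · rintro ⟨q, hq, hr⟩
        rcases hr with rfl | hr
        · exact hq
        · obtain ⟨m, hm, hrm⟩ := Set.mem_iUnion₂.1 hr
          rw [mem_tailS] at hrm
          have hag := extends_restrict.1 hrm.1
          show ExtendsL a r
          rw [extendsL_iff]
          intro i hi
          rw [hag i (lt_of_lt_of_le hi hm)]
          exact extendsL_iff.1 hq i hi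
    rw [heq]
    refine isOpen_biUnion fun q hq => ?_
    exact TopologicalSpace.isOpen_generateFrom_of_mem
      ⟨q, {m | a.length ≤ m}, fun _ => 0, freeFilter_cofinite (hF q) a.length, rfl⟩
  refine ⟨hsl, hopen, ?_⟩
  intro p U hU
  letI := tauF F
  haveI : (F p).NeBot := (hF p).1
  have hbasis := TopologicalSpace.isTopologicalBasis_of_subbasis
    (s := {U | ∃ q M g, M ∈ F q ∧ U = Shat q M g}) (t := tauF F) rfl
  obtain ⟨V, ⟨σ, ⟨hfin, hsubb⟩, rfl⟩, hpV, hVU⟩ := hbasis.mem_nhds_iff.1 hU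
  obtain ⟨A, hA, h, H⟩ := finite_good F hF p hfin hsubb (fun s hs => hpV s hs)
  obtain ⟨N, hN⟩ := Filter.nonempty_of_mem hA
  exact ⟨restrict p N, h N, extends_restrict_self p N, (H N hN (h N) le_rfl).trans hVU⟩
end

section
/- For every strategy σ, there exists a family (Γ_z)_{z ∈ 2^ω} of games, each following σ, such that r^i(Γ_z) ≠ r^j(Γ_y) whenever (z,i) ≠ (y,j) in 2^ω × 2; that is, all 2·2^ℵ₀ coordinate results are pairwise distinct elements of ω^ω. -/
open Set Topology

namespace Stmt11Aux

def bit (b : Bool) : ℕ := cond b 1 0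

def play (σ : Strategy) (z : ℕ → Bool) : ℕ → (List ℕ × List ℕ)
  | 0 => ([0], [1])
  | n+1 => (σ.s0 (play σ z n) ++ [bit (z n)], σ.s1 (play σ z n) ++ [bit (z n)])

lemma play_succ (σ : Strategy) (z : ℕ → Bool) (n : ℕ) :
    play σ z (n+1) =
      (σ.s0 (play σ z n) ++ [bit (z n)], σ.s1 (play σ z n) ++ [bit (z n)]) := rfl

def proj (i : Fin 2) (c : List ℕ × List ℕ) : List ℕ := if i = 0 then c.1 else c.2

def str (σ : Strategy) (i : Fin 2) (c : List ℕ × List ℕ) : List ℕ :=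
  if i = 0 then σ.s0 c else σ.s1 c

lemma spre (σ : Strategy) (i : Fin 2) (c : List ℕ × List ℕ) :
    SPrefix (proj i c) (str σ i c) := by
  unfold proj str; split
  · exact σ.h0 c
  · exact σ.h1 c

lemma proj_play_succ (σ : Strategy) (z : ℕ → Bool) (n : ℕ) (i : Fin 2) :
    proj i (play σ z (n+1)) = str σ i (play σ z n) ++ [bit (z n)] := by
  unfold proj str; rw [play_succ]; split <;> rfl

lemma len_lt {a b : List ℕ} (h : SPrefix a b) : a.length < b.length :=
  lt_of_le_of_ne h.1.length_le (fun e => h.2 (h.1.eq_of_length e))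

lemma play_len (σ : Strategy) (z : ℕ → Bool) (i : Fin 2) :
    ∀ n, n < (proj i (play σ z n)).length := by
  intro n
  induction n with
  | zero => unfold proj play; split <;> simp
  | succ n ih =>
    rw [proj_play_succ]
    have := len_lt (spre σ i (play σ z n))
    simp only [List.length_append, List.length_cons, List.length_nil]
    omega

lemma play_prefix (σ : Strategy) (z : ℕ → Bool) (i : Fin 2) {n m : ℕ} (h : n ≤ m) :
    proj i (play σ z n) <+: proj i (play σ z m) := by
  induction m, h using Nat.le_induction with
  | base => exact List.prefix_rfl
  | succ m hm ih =>
    refine ih.trans ?_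
    rw [proj_play_succ]
    exact (spre σ i (play σ z m)).1.trans (List.prefix_append _ _)

def res (σ : Strategy) (z : ℕ → Bool) (i : Fin 2) (k : ℕ) : ℕ :=
  (proj i (play σ z (k+1))).getD k 0

lemma res_eq (σ : Strategy) (z : ℕ → Bool) (i : Fin 2) (n k : ℕ)
    (hk : k < (proj i (play σ z n)).length) :
    res σ z i k = (proj i (play σ z n))[k] := by
  have hk' : k < (proj i (play σ z (k+1))).length :=
    lt_of_lt_of_le (Nat.lt_succ_self k) (le_of_lt (play_len σ z i (k+1)))
  unfold res
  rw [List.getD_eq_getElem _ _ hk']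
  rcases le_total (k+1) n with h | h
  · exact (play_prefix σ z i h).getElem hk'
  · exact ((play_prefix σ z i h).getElem hk).symm

lemma extends_res (σ : Strategy) (z : ℕ → Bool) (i : Fin 2) (n : ℕ) :
    ExtendsL (proj i (play σ z n)) (res σ z i) := by
  unfold ExtendsL _root_.restrict
  apply List.ext_getElem (by simp)
  intro j h1 h2
  rw [List.getElem_ofFn]
  exact res_eq σ z i n j h2

lemma extendsL_getElem {a : List ℕ} {p : ℕ → ℕ} (h : ExtendsL a p) {j : ℕ}
    (hj : j < a.length) : p j = a[j] := by
  rw [← List.getD_eq_getElem a 0 hj, ← h]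
  have hj' : j < (_root_.restrict p a.length).length := by
    simpa [_root_.restrict] using hj
  rw [List.getD_eq_getElem _ _ hj']
  simp [_root_.restrict]

lemma play_agree (σ : Strategy) {z y : ℕ → Bool} {n : ℕ} (h : ∀ k < n, z k = y k) :
    play σ z n = play σ y n := by
  induction n with
  | zero => rfl
  | succ n ih =>
    have h1 : play σ z n = play σ y n := ih (fun k hk => h k (Nat.lt_succ_of_lt hk))
    rw [play_succ, play_succ, h1, h n (Nat.lt_succ_self n)]

lemma res_zero (σ : Strategy) (z : ℕ → Bool) (i : Fin 2) : res σ z i 0 = (i : ℕ) := by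
  have h0 : 0 < (proj i (play σ z 0)).length := play_len σ z i 0
  rw [extendsL_getElem (extends_res σ z i 0) h0]
  fin_cases i <;> simp [proj, play]

lemma res_key (σ : Strategy) (z : ℕ → Bool) (i : Fin 2) (n : ℕ) :
    res σ z i (str σ i (play σ z n)).length = bit (z n) := by
  have hlen : (proj i (play σ z (n+1))).length = (str σ i (play σ z n)).length + 1 := by
    rw [proj_play_succ]; simp
  have hk : (str σ i (play σ z n)).length < (proj i (play σ z (n+1))).length := by omega
  rw [extendsL_getElem (extends_res σ z i (n+1)) hk]
  simp only [proj_play_succ]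
  rw [List.getElem_append_right (le_refl _)]
  simp

end Stmt11Aux

open Stmt11Aux

/-- For every strategy there is a continuum-indexed family of games following it
whose coordinate results are pairwise distinct. -/
theorem stmt11 (σ : Strategy) :
    ∃ (G : (ℕ → Bool) → Game) (R : (ℕ → Bool) → Fin 2 → (ℕ → ℕ)),
      (∀ z, (G z).Follows σ) ∧
      (∀ z, (G z).IsResult (R z 0) (R z 1)) ∧
      ∀ z i y j, (z, i) ≠ (y, j) → R z i ≠ R y j := by
  refine ⟨fun z => ⟨fun n => play σ z n,
      fun n => (σ.s0 (play σ z n), σ.s1 (play σ z n)),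
      fun n => σ.h0 _, ?_, fun n => σ.h1 _, ?_⟩,
    fun z i => res σ z i, fun z n => ⟨rfl, rfl⟩, ?_, ?_⟩
  · intro n
    show SPrefix (σ.s0 (play σ z n)) (play σ z (n+1)).1
    rw [play_succ]
    exact ⟨List.prefix_append _ _, fun h => by simpa using congrArg List.length h⟩
  · intro n
    show SPrefix (σ.s1 (play σ z n)) (play σ z (n+1)).2
    rw [play_succ]
    exact ⟨List.prefix_append _ _, fun h => by simpa using congrArg List.length h⟩
  · intro z n
    exact ⟨extends_res σ z 0 n, extends_res σ z 1 n⟩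
  · intro z i y j hne heq
    have heq' : res σ z i = res σ y j := heq
    by_cases hij : i = j
    · subst hij
      have hzy : z ≠ y := fun h => hne (by rw [h])
      have hex : ∃ k, z k ≠ y k := by
        by_contra h
        push_neg at h
        exact hzy (funext h)
      set n := Nat.find hex with hn
      have h1 : z n ≠ y n := Nat.find_spec hex
      have h2 : ∀ k < n, z k = y k := fun k hk => by
        have := Nat.find_min hex hk
        simpa using this
      have hp : play σ z n = play σ y n := play_agree σ h2
      have e1 := res_key σ z i n
      have e2 := res_key σ y i n
      rw [← hp] at e2
      have : bit (z n) = bit (y n) := by rw [← e1, ← e2, heq']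
      cases hz : z n <;> cases hy : y n <;> simp_all [bit]
    · have e1 := res_zero σ z i
      have e2 := res_zero σ y j
      have : (i : ℕ) = (j : ℕ) := by rw [← e1, ← e2, heq']
      exact hij (Fin.ext this)
end

section
/- Suppose the standard Lusin scheme S is a Lusin π-base for a topological space (ω^ω, τ), and L is a Lusin π-base for the product (ω^ω, τ) × (ω^ω, τ). Then L is a candidate: a strict Lusin scheme on ω^ω × ω^ω such that {L_b : b ∈ ω^{<ω}} is a π-net for the Baire space product ω^ω × ω^ω and each L_b has nonempty interior in ω^ω × ω^ω (with the product of Baire topologies). -/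
open Set Topology

/-- canonical extension of a list by zeros -/
def ext0 (a : List ℕ) : ℕ → ℕ := fun i => a.getD i 0

lemma restrict_ext0 (a : List ℕ) : restrict (ext0 a) a.length = a := by
  apply List.ext_get
  · simp [_root_.restrict]
  · intro i h1 h2
    simp [_root_.restrict, ext0, List.getD_eq_getElem?_getD, List.getElem?_eq_getElem h2]

lemma Sset_eq_cylinder (p : ℕ → ℕ) (n : ℕ) :
    Sset (restrict p n) = PiNat.cylinder p n := by
  ext q
  simp only [Sset, ExtendsL, Set.mem_setOf_eq, restrict_length, PiNat.mem_cylinder_iff]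
  constructor
  · intro h i hi
    have := List.ofFn_inj.1 h
    exact congrFun this ⟨i, hi⟩
  · intro h
    exact List.ofFn_inj.2 (funext fun i => h i i.2)

lemma Sset_open (a : List ℕ) : IsOpen (Sset a) := by
  rw [← restrict_ext0 a, Sset_eq_cylinder]
  exact PiNat.isOpen_cylinder _ _ _

lemma Sset_nonempty (a : List ℕ) : (Sset a).Nonempty :=
  ⟨ext0 a, restrict_ext0 a⟩

lemma subset_tail {X : Type*} (L : List ℕ → Set X) (a : List ℕ) (k : ℕ) :
    L (a ++ [k]) ⊆ tailL L a k := fun x hx =>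
  Set.mem_iUnion.2 ⟨k, Set.mem_iUnion.2 ⟨le_refl k, hx⟩⟩

lemma lusin_nonempty {X : Type*} {L : List ℕ → Set X} (h : StrictLusin L)
    (b : List ℕ) : (L b).Nonempty := by
  obtain ⟨x, hx⟩ := h.2.2.2.2 (ext0 b)
  refine ⟨x, ?_⟩
  have hxmem : x ∈ ⋂ n, L (restrict (ext0 b) n) := hx ▸ rfl
  have := Set.mem_iInter.1 hxmem b.length
  rwa [restrict_ext0] at this

lemma cylinder_nhds {U : Set (ℕ → ℕ)} {p : ℕ → ℕ} (h : U ∈ 𝓝 p) :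
    ∃ n, Sset (restrict p n) ⊆ U := by
  obtain ⟨t, ⟨x, n, rfl⟩, hpt, htU⟩ :=
    (PiNat.isTopologicalBasis_cylinders (fun _ : ℕ => ℕ)).mem_nhds_iff.1 h
  refine ⟨n, ?_⟩
  rw [Sset_eq_cylinder, PiNat.mem_cylinder_iff_eq.1 hpt]
  exact htU


lemma Sset_mem_self (p : ℕ → ℕ) (n : ℕ) : p ∈ Sset (restrict p n) := by
  rw [Sset_eq_cylinder]; exact PiNat.self_mem_cylinder p n

lemma pinet_step (L : List ℕ → Set ((ℕ → ℕ) × (ℕ → ℕ)))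
    (hne : ∀ b, (L b).Nonempty)
    (H : ∀ p q n m : _, ∃ b k,
      tailL L b k ⊆ Sset (restrict p n) ×ˢ Sset (restrict q m)) :
    IsPiNet (inferInstance : TopologicalSpace ((ℕ → ℕ) × (ℕ → ℕ))) {S | ∃ b, S = L b} := by
  constructor
  · rintro G ⟨b, rfl⟩
    exact hne b
  · intro U hU hUne
    obtain ⟨⟨p, q⟩, hpq⟩ := hUne
    have hUnhds : U ∈ 𝓝 (p, q) := hU.mem_nhds hpq
    rw [mem_nhds_prod_iff] at hUnhds
    obtain ⟨V, hV, W, hW, hVW⟩ := hUnhds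
    obtain ⟨n, hn⟩ := cylinder_nhds hV
    obtain ⟨m, hm⟩ := cylinder_nhds hW
    obtain ⟨b, k, htail⟩ := H p q n m
    refine ⟨L (b ++ [k]), ⟨b ++ [k], rfl⟩, ?_⟩
    exact (subset_tail L b k).trans (htail.trans (fun x hx => hVW ⟨hn hx.1, hm hx.2⟩))

lemma interior_step (T : Set ((ℕ → ℕ) × (ℕ → ℕ)))
    (h : ∃ a a', Sset a ×ˢ Sset a' ⊆ T) : (interior T).Nonempty := by
  obtain ⟨a, a', hsub⟩ := h
  obtain ⟨x, hx⟩ := (Sset_nonempty a).prod (Sset_nonempty a')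
  exact ⟨x, interior_maximal hsub ((Sset_open a).prod (Sset_open a')) hx⟩

/-- If `S` is a Lusin π-base for `(ω^ω, τ)` and `L` is a Lusin π-base for the
square of this space, then `L` is a candidate. -/
theorem stmt14 (τ : TopologicalSpace (ℕ → ℕ)) (hS : IsLusinPiBase τ Sset)
    (L : List ℕ → Set ((ℕ → ℕ) × (ℕ → ℕ)))
    (hL : IsLusinPiBase (@instTopologicalSpaceProd (ℕ → ℕ) (ℕ → ℕ) τ τ) L) :
    IsCandidate L := by
  obtain ⟨hLS, hLopen, hL5⟩ := hL
  obtain ⟨hSS, hSopen, hS5⟩ := hS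
  refine ⟨hLS, ?_, ?_⟩
  · refine pinet_step L (fun b => lusin_nonempty hLS b) (fun p q n m => ?_)
    have hopen : IsOpen[@instTopologicalSpaceProd (ℕ → ℕ) (ℕ → ℕ) τ τ]
        (Sset (restrict p n) ×ˢ Sset (restrict q m)) :=
      @IsOpen.prod _ _ τ τ _ _ (hSopen _) (hSopen _)
    have hmem : Sset (restrict p n) ×ˢ Sset (restrict q m) ∈
        @nhds _ (@instTopologicalSpaceProd (ℕ → ℕ) (ℕ → ℕ) τ τ) (p, q) :=
      @IsOpen.mem_nhds _ (@instTopologicalSpaceProd (ℕ → ℕ) (ℕ → ℕ) τ τ) _ _ hopen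
        ⟨Sset_mem_self p n, Sset_mem_self q m⟩
    obtain ⟨b, k, _, htail⟩ := hL5 (p, q) _ hmem
    exact ⟨b, k, htail⟩
  · intro b
    refine interior_step (L b) ?_
    obtain ⟨⟨p, q⟩, hpq⟩ := lusin_nonempty hLS b
    have hmem : L b ∈ @nhds _ (@instTopologicalSpaceProd (ℕ → ℕ) (ℕ → ℕ) τ τ) (p, q) :=
      @IsOpen.mem_nhds _ (@instTopologicalSpaceProd (ℕ → ℕ) (ℕ → ℕ) τ τ) _ _ (hLopen b) hpq
    rw [@mem_nhds_prod_iff _ _ τ τ] at hmem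
    obtain ⟨V, hV, W, hW, hVW⟩ := hmem
    obtain ⟨a, k, _, htail⟩ := hS5 p V hV
    obtain ⟨a', k', _, htail'⟩ := hS5 q W hW
    exact ⟨a ++ [k], a' ++ [k'], fun x hx =>
      hVW ⟨htail (subset_tail Sset a k hx.1), htail' (subset_tail Sset a' k' hx.2)⟩⟩
end
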